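/- For 0 < r < 1, the Euclidean area (two-dimensional Lebesgue measure) of ⋃_{x∈(-1,1)} D_ρ(x,r) equals ((1+r²)/r)²·arctan r − (1−r²)/r. -/

import Mathlib

/-!
For `z = u + iv` in the disk and `x ∈ (-1, 1)`, the condition `z ∈ D_ρ(x, r)` says that a
quadratic polynomial in `x` is negative. Completing the square, some `x ∈ (-1, 1)` works iff
`|v| (1 - r²) < r (1 - |z|²)`. With `k = (1 - r²)/(2r)` and `R = (1 + r²)/(2r)`, so that
`R² = 1 + k²`, this says that the union is the lens `{(|v| + k)² + u² < R²}`, the intersection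
of the disks of radius `R` about `± i k`, bounded by two circular arcs through `± 1`. Its area is
`2 ∫_{-1}^{1} (√(R² - u²) - k) du = 2 R² arcsin (1/R) - 2k`, and
`arcsin (1/R) = arcsin (2r / (1 + r²)) = 2 arctan r`.
-/

open Complex MeasureTheory Set

lemma norm_div_lt_iff_normSq_lt {a b : ℂ} {r : ℝ} (hr : 0 ≤ r) (hb : b ≠ 0) :
    ‖a / b‖ < r ↔ normSq a < r ^ 2 * normSq b := by
  rw [norm_div, div_lt_iff₀ (norm_pos_iff.2 hb), ← sq_lt_sq₀ (norm_nonneg _) (by positivity),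
    mul_pow, Complex.sq_norm, Complex.sq_norm]

lemma one_sub_mul_ne_zero_of_norm_lt_one {𝕜 : Type*} [NormedRing 𝕜] [NormOneClass 𝕜]
    {a z : 𝕜} (ha : ‖a‖ < 1) (hz : ‖z‖ < 1) : 1 - a * z ≠ 0 := by
  refine sub_ne_zero.2 fun h => ?_
  have : ‖a * z‖ < 1 :=
    (norm_mul_le a z).trans_lt (mul_lt_one_of_nonneg_of_lt_one_left (norm_nonneg _) ha hz.le)
  simp [← h] at this

lemma pseudohyperbolic_lt_iff {x r : ℝ} {z : ℂ} (hr : 0 ≤ r) (hx : |x| < 1)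
    (hz : ‖z‖ < 1) :
    ‖(z - x) / (1 - x * z)‖ < r ↔
      (z.re - x) ^ 2 + z.im ^ 2 < r ^ 2 * ((1 - x * z.re) ^ 2 + (x * z.im) ^ 2) := by
  have hx' : ‖(x : ℂ)‖ < 1 := by rwa [norm_real, Real.norm_eq_abs]
  rw [norm_div_lt_iff_normSq_lt hr (one_sub_mul_ne_zero_of_norm_lt_one hx' hz)]
  simp only [normSq_apply, sub_re, sub_im, ofReal_re, ofReal_im, one_re, one_im, mul_re, mul_im]
  ring_nf

lemma norm_lt_one_iff_re_sq_add_im_sq {z : ℂ} : ‖z‖ < 1 ↔ z.re ^ 2 + z.im ^ 2 < 1 := by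
  rw [← sq_lt_one_iff₀ (norm_nonneg z), Complex.sq_norm, normSq_apply, ← sq, ← sq]

/-- Completing the square in `x`: the quadratic on the left is least at
`x = u (1 - r²) / (1 - r² (u² + v²))`, where its value is the last bracket. -/
lemma pseudohyperbolic_complete_square (u v x r : ℝ) :
    (1 - r ^ 2 * (u ^ 2 + v ^ 2)) *
        ((u - x) ^ 2 + v ^ 2 - r ^ 2 * ((1 - x * u) ^ 2 + (x * v) ^ 2)) =
      ((1 - r ^ 2 * (u ^ 2 + v ^ 2)) * x - u * (1 - r ^ 2)) ^ 2 +
        ((v * (1 - r ^ 2)) ^ 2 - (r * (1 - (u ^ 2 + v ^ 2))) ^ 2) := by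
  ring

lemma exists_pseudohyperbolic_lt_iff {r : ℝ} (hr0 : 0 < r) (hr1 : r < 1) (z : ℂ) :
    (∃ x ∈ Ioo (-1 : ℝ) 1, ‖z‖ < 1 ∧ ‖(z - x) / (1 - x * z)‖ < r) ↔
      |z.im| * (1 - r ^ 2) < r * (1 - (z.re ^ 2 + z.im ^ 2)) := by
  set u := z.re
  set v := z.im
  have hr2 : 0 < 1 - r ^ 2 := by nlinarith
  have habs : (|v| * (1 - r ^ 2)) ^ 2 = (v * (1 - r ^ 2)) ^ 2 := by rw [mul_pow, sq_abs, mul_pow]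
  constructor
  · rintro ⟨x, hx, hz, hxz⟩
    rw [pseudohyperbolic_lt_iff hr0.le (abs_lt.2 hx) hz] at hxz
    rw [norm_lt_one_iff_re_sq_add_im_sq] at hz
    have hA : 0 < 1 - r ^ 2 * (u ^ 2 + v ^ 2) := by nlinarith
    have hD : (|v| * (1 - r ^ 2)) ^ 2 < (r * (1 - (u ^ 2 + v ^ 2))) ^ 2 := by
      nlinarith [pseudohyperbolic_complete_square u v x r, mul_pos hA (sub_pos.2 hxz),
        sq_nonneg ((1 - r ^ 2 * (u ^ 2 + v ^ 2)) * x - u * (1 - r ^ 2))]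
    exact (sq_lt_sq₀ (by positivity) (by nlinarith)).1 hD
  · intro h
    have hz : u ^ 2 + v ^ 2 < 1 := by nlinarith [abs_nonneg v]
    have hA : 0 < 1 - r ^ 2 * (u ^ 2 + v ^ 2) := by nlinarith
    have hD : (v * (1 - r ^ 2)) ^ 2 < (r * (1 - (u ^ 2 + v ^ 2))) ^ 2 := by
      rw [← habs]; exact pow_lt_pow_left₀ h (by positivity) two_ne_zero
    have hu : |u| * (1 - r ^ 2) < 1 - r ^ 2 * (u ^ 2 + v ^ 2) := by
      have hu1 : |u| < 1 := by rw [← sq_lt_one_iff₀ (abs_nonneg u), sq_abs]; nlinarith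
      nlinarith [mul_lt_mul_of_pos_left h hr0, mul_pos (sub_pos.2 hu1) hr2,
        mul_nonneg (mul_nonneg hr0.le hr2.le) (abs_nonneg v), sq_abs u, sq_abs v]
    set x := u * (1 - r ^ 2) / (1 - r ^ 2 * (u ^ 2 + v ^ 2)) with hx_def
    have hx : |x| < 1 := by
      rwa [abs_div, abs_of_pos hA, abs_mul, abs_of_pos hr2, div_lt_one hA]
    have hz' : ‖z‖ < 1 := norm_lt_one_iff_re_sq_add_im_sq.2 hz
    refine ⟨x, abs_lt.1 hx, hz', (pseudohyperbolic_lt_iff hr0.le hx hz').2 ?_⟩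
    have hmin : (1 - r ^ 2 * (u ^ 2 + v ^ 2)) * x - u * (1 - r ^ 2) = 0 := by
      rw [hx_def]; field_simp; ring
    nlinarith [pseudohyperbolic_complete_square u v x r]

theorem iUnion_pseudohyperbolic_ball_eq_lens {r : ℝ} (hr0 : 0 < r) (hr1 : r < 1) :
    (⋃ x ∈ Ioo (-1 : ℝ) 1, {z : ℂ | ‖z‖ < 1 ∧ ‖(z - x) / (1 - x * z)‖ < r}) =
      {z : ℂ | (|z.im| + (1 - r ^ 2) / (2 * r)) ^ 2 + z.re ^ 2 <
        ((1 + r ^ 2) / (2 * r)) ^ 2} := by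
  ext z
  simp only [mem_iUnion, exists_prop, mem_ofPred_eq, exists_pseudohyperbolic_lt_iff hr0 hr1]
  have hscale :
      r * (((1 + r ^ 2) / (2 * r)) ^ 2 - ((|z.im| + (1 - r ^ 2) / (2 * r)) ^ 2 + z.re ^ 2)) =
        r * (1 - (z.re ^ 2 + z.im ^ 2)) - |z.im| * (1 - r ^ 2) := by
    field_simp
    rw [← sq_abs z.im]
    ring
  rw [← sub_pos, ← sub_pos (b := _ + _), ← hscale, mul_pos_iff_of_pos_left hr0]

lemma hasDerivAt_primitive_sqrt_sq_sub_sq {R x : ℝ} (hR : 0 < R) (hx : x ^ 2 < R ^ 2) :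
    HasDerivAt (fun t => (t * √(R ^ 2 - t ^ 2) + R ^ 2 * Real.arcsin (t / R)) / 2)
      √(R ^ 2 - x ^ 2) x := by
  have hpos : 0 < R ^ 2 - x ^ 2 := sub_pos.2 hx
  have hxR : |x / R| < 1 := by
    rw [abs_div, abs_of_pos hR, div_lt_one hR]; exact abs_lt_of_sq_lt_sq hx hR.le
  have hsqrt :
      HasDerivAt (fun t => √(R ^ 2 - t ^ 2)) (-(2 * x) / (2 * √(R ^ 2 - x ^ 2))) x := by
    simpa using ((hasDerivAt_pow 2 x).const_sub (R ^ 2)).sqrt hpos.ne'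
  have harcsin : HasDerivAt (fun t => Real.arcsin (t / R))
      (1 / √(1 - (x / R) ^ 2) * (1 / R)) x :=
    (Real.hasDerivAt_arcsin (abs_lt.1 hxR).1.ne' (abs_lt.1 hxR).2.ne).comp (h₂ := Real.arcsin) x
      ((hasDerivAt_id' x).div_const R)
  have hcos : √(1 - (x / R) ^ 2) = √(R ^ 2 - x ^ 2) / R := by
    rw [show 1 - (x / R) ^ 2 = (R ^ 2 - x ^ 2) / R ^ 2 by field_simp,
      Real.sqrt_div' _ (sq_nonneg R), Real.sqrt_sq hR.le]
  refine (((hasDerivAt_id x).mul hsqrt).add (harcsin.const_mul (R ^ 2))).div_const 2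
    |>.congr_deriv ?_
  have hy : 0 < √(R ^ 2 - x ^ 2) := Real.sqrt_pos.2 hpos
  rw [hcos, id]
  field_simp
  rw [Real.sq_sqrt hpos.le]
  ring

lemma integral_sqrt_sq_sub_sq {R a : ℝ} (hR : 0 < R) (ha : 0 ≤ a) (haR : a ≤ R) :
    ∫ x in -a..a, √(R ^ 2 - x ^ 2) = a * √(R ^ 2 - a ^ 2) + R ^ 2 * Real.arcsin (a / R) := by
  rw [intervalIntegral.integral_eq_sub_of_hasDerivAt_of_le (by linarith) (by fun_prop)
    (fun x hx => hasDerivAt_primitive_sqrt_sq_sub_sq hR ?_)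
    ((by fun_prop : Continuous fun x : ℝ => √(R ^ 2 - x ^ 2)).intervalIntegrable _ _)]
  · simp only [neg_div, Real.arcsin_neg, neg_sq]
    ring
  · nlinarith [hx.1, hx.2]

lemma lens_eq_preimage_regionBetween {k R : ℝ} (hk : 0 ≤ k) (hkR : R ^ 2 = 1 + k ^ 2) :
    {z : ℂ | (|z.im| + k) ^ 2 + z.re ^ 2 < R ^ 2} =
      measurableEquivRealProd ⁻¹' regionBetween (-fun u => √(R ^ 2 - u ^ 2) - k)
        (fun u => √(R ^ 2 - u ^ 2) - k) (Ioo (-1) 1) := by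
  ext z
  simp only [mem_ofPred_eq, mem_preimage, measurableEquivRealProd_apply, regionBetween, mem_Ioo,
    Pi.neg_apply, ← abs_lt]
  have hsqrt : |z.im| + k < √(R ^ 2 - z.re ^ 2) ↔ (|z.im| + k) ^ 2 + z.re ^ 2 < R ^ 2 := by
    rw [Real.lt_sqrt (by positivity), lt_sub_iff_add_lt]
  refine ⟨fun h => ⟨?_, by linarith [hsqrt.2 h]⟩, fun ⟨_, h⟩ => hsqrt.1 (by linarith)⟩
  rw [← sq_lt_one_iff_abs_lt_one]
  nlinarith [abs_nonneg z.im]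

theorem volume_lens {k R : ℝ} (hk : 0 ≤ k) (hR : 0 < R) (hkR : R ^ 2 = 1 + k ^ 2) :
    volume {z : ℂ | (|z.im| + k) ^ 2 + z.re ^ 2 < R ^ 2} =
      ENNReal.ofReal (2 * R ^ 2 * Real.arcsin (1 / R) - 2 * k) := by
  rw [lens_eq_preimage_regionBetween hk hkR]
  set g : ℝ → ℝ := fun u => √(R ^ 2 - u ^ 2) - k
  have hg : Continuous g := by fun_prop
  have hg_nonneg : ∀ u ∈ Ioo (-1 : ℝ) 1, 0 ≤ g u := fun u ⟨hu₁, hu₂⟩ =>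
    sub_nonneg.2 <| (Real.le_sqrt hk (by nlinarith)).2 (by nlinarith)
  have hint : IntegrableOn g (Ioo (-1) 1) := hg.integrableOn_Icc.mono_set Ioo_subset_Icc_self
  have hmeas : MeasurableSet (regionBetween (-g) g (Ioo (-1) 1)) :=
    measurableSet_regionBetween hg.neg.measurable hg.measurable measurableSet_Ioo
  rw [volume_preserving_equiv_real_prod.measure_preimage hmeas.nullMeasurableSet,
    Measure.volume_eq_prod, volume_regionBetween_eq_integral hint.neg hint measurableSet_Ioo
      fun u hu => neg_le_self (hg_nonneg u hu),
    ← integral_Ioc_eq_integral_Ioo, ← intervalIntegral.integral_of_le (by norm_num)]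
  have hR1 : 1 ≤ R := by nlinarith
  simp only [g, Pi.sub_apply, Pi.neg_apply, sub_neg_eq_add, ← two_mul]
  rw [intervalIntegral.integral_const_mul, intervalIntegral.integral_sub
    ((by fun_prop : Continuous fun x : ℝ => √(R ^ 2 - x ^ 2)).intervalIntegrable _ _)
    intervalIntegrable_const, integral_sqrt_sq_sub_sq hR zero_le_one hR1,
    intervalIntegral.integral_const, hkR, one_pow, add_sub_cancel_left, Real.sqrt_sq hk,
    smul_eq_mul]
  ring_nf

lemma arcsin_two_mul_div_one_add_sq {r : ℝ} (h₁ : -1 ≤ r) (h₂ : r ≤ 1) :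
    Real.arcsin (2 * r / (1 + r ^ 2)) = 2 * Real.arctan r := by
  refine Real.arcsin_eq_of_sin_eq ?_ ⟨?_, ?_⟩
  · rw [Real.sin_two_mul, Real.sin_arctan, Real.cos_arctan]
    have : 0 < √(1 + r ^ 2) := by positivity
    field_simp
    rw [Real.sq_sqrt (by positivity)]
  · have := Real.arctan_strictMono.monotone h₁
    rw [Real.arctan_neg, Real.arctan_one] at this; linarith
  · have := Real.arctan_strictMono.monotone h₂
    rw [Real.arctan_one] at this; linarith

theorem area_of_union_pseudohyperbolic_disks (r : ℝ) (hr0 : 0 < r) (hr1 : r < 1) :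
    volume (⋃ x ∈ Set.Ioo (-1 : ℝ) 1,
        {z : ℂ | ‖z‖ < 1 ∧ ‖(z - (x : ℂ)) / (1 - (x : ℂ) * z)‖ < r}) =
      ENNReal.ofReal (((1 + r ^ 2) / r) ^ 2 * Real.arctan r - (1 - r ^ 2) / r) := by
  have hk : 0 ≤ (1 - r ^ 2) / (2 * r) := div_nonneg (by nlinarith) (by positivity)
  have hR : 0 < (1 + r ^ 2) / (2 * r) := by positivity
  have hkR : ((1 + r ^ 2) / (2 * r)) ^ 2 = 1 + ((1 - r ^ 2) / (2 * r)) ^ 2 := by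
    field_simp
    ring
  rw [iUnion_pseudohyperbolic_ball_eq_lens hr0 hr1, volume_lens hk hR hkR, one_div_div,
    arcsin_two_mul_div_one_add_sq (by linarith) hr1.le]
  congr 1
  field_simp
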